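/- arXiv:1609.02670 — 4 statements merged into one kernel-verified Lean document; each statement's English description precedes it below -/
import Mathlib

section
/- Let K be an algebraically closed field, n ≥ 2, and let φ be a K-algebra automorphism of K[x_1,…,x_n] such that f_1 := φ(x_1) is congruent to x_1 modulo I², where I is the ideal of K[x_1,…,x_n] generated by x_1,…,x_n. If x_1 divides f_1, then f_1 = x_1. -/
open MvPolynomial

/-- Units of a multivariate polynomial ring over a field are constants. -/
lemma unit_is_const {K : Type*} [Field K] : ∀ (m : ℕ) (g : MvPolynomial (Fin m) K),
    IsUnit g → ∃ c : K, g = C c := by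
  intro m
  induction m with
  | zero =>
    intro g _
    exact ⟨_, MvPolynomial.eq_C_of_isEmpty g⟩
  | succ m ih =>
    intro g hg
    have h1 : IsUnit ((finSuccEquiv K m) g) := hg.map _
    obtain ⟨r, hr, hrg⟩ := Polynomial.isUnit_iff.mp h1
    obtain ⟨c, rfl⟩ := ih r hr
    refine ⟨c, ?_⟩
    have := congrArg (finSuccEquiv K m).symm hrg
    rw [(finSuccEquiv K m).symm_apply_apply] at this
    rw [← this]
    exact RingHom.congr_fun (finSuccEquiv_comp_C_eq_C (R := K) m) c

/-- `X 0` is prime. -/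
lemma X_zero_prime {K : Type*} [Field K] (m : ℕ) :
    Prime (X 0 : MvPolynomial (Fin (m + 1)) K) := by
  have : Prime ((finSuccEquiv K m) (X 0)) := by
    rw [finSuccEquiv_X_zero]
    exact Polynomial.prime_X
  exact (MulEquiv.prime_iff (p := X 0) (finSuccEquiv K m).toMulEquiv).mp this

/-- Elements of `I = (X i)` have zero constant coefficient. -/
lemma constCoeff_zero_of_mem_span {K : Type*} [Field K] {m : ℕ}
    {p : MvPolynomial (Fin m) K}
    (hp : p ∈ Ideal.span (Set.range (X : Fin m → MvPolynomial (Fin m) K))) :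
    constantCoeff p = 0 := by
  rw [← Set.image_univ] at hp
  have := mem_ideal_span_X_image.mp hp
  rw [constantCoeff_eq]
  by_contra h
  obtain ⟨i, _, hi⟩ := this 0 (mem_support_iff.mpr h)
  exact hi rfl

/-- Let `φ` be a `K`-algebra automorphism of `K[x_1,…,x_n]` (`n ≥ 2`, `K` algebraically
closed) such that `f₁ := φ(x_1) ≡ x_1 mod I²`, where `I = (x_1,…,x_n)`.
If `x_1 ∣ f₁` then `f₁ = x_1`. -/
theorem coordinate_divisible_by_X_eq_X (K : Type*) [Field K] [IsAlgClosed K] (n : ℕ)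
    (φ : MvPolynomial (Fin (n + 2)) K ≃ₐ[K] MvPolynomial (Fin (n + 2)) K)
    (f1 : MvPolynomial (Fin (n + 2)) K) (hf1 : f1 = φ (X 0))
    (hcong : f1 - X 0 ∈ (Ideal.span (Set.range (X : Fin (n + 2) → MvPolynomial (Fin (n + 2)) K))) ^ 2)
    (hdvd : (X 0 : MvPolynomial (Fin (n + 2)) K) ∣ f1) :
    f1 = X 0 := by
  -- f1 is prime since it's the image of the prime X 0 under an automorphism
  have hXprime : Prime (X 0 : MvPolynomial (Fin (n + 2)) K) := X_zero_prime (n + 1)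
  have hf1prime : Prime f1 := by
    rw [hf1]
    exact (MulEquiv.prime_iff (p := X 0) φ.toRingEquiv.toMulEquiv).mpr hXprime
  obtain ⟨g, hg⟩ := hdvd
  -- X 0 is not a unit
  have hXnotunit : ¬ IsUnit (X 0 : MvPolynomial (Fin (n + 2)) K) := by
    intro h
    have := h.map (constantCoeff (σ := Fin (n + 2)) (R := K))
    rw [constantCoeff_X] at this
    exact not_isUnit_zero this
  -- hence g is a unit, so a constant
  have hgunit : IsUnit g := (hf1prime.irreducible.isUnit_or_isUnit hg).resolve_left hXnotunit
  obtain ⟨c, rfl⟩ := unit_is_const (n + 2) g hgunit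
  -- The linear functional D p = constantCoeff (pderiv 0 p) kills I^2
  set I : Ideal (MvPolynomial (Fin (n + 2)) K) :=
    Ideal.span (Set.range (X : Fin (n + 2) → MvPolynomial (Fin (n + 2)) K)) with hI
  have hD : ∀ p ∈ I ^ 2, constantCoeff (pderiv 0 p) = 0 := by
    intro p hp
    rw [sq] at hp
    refine Submodule.mul_induction_on hp ?_ ?_
    · intro a ha b hb
      have ha0 : constantCoeff a = 0 := constCoeff_zero_of_mem_span ha
      have hb0 : constantCoeff b = 0 := constCoeff_zero_of_mem_span hb
      rw [pderiv_mul, map_add, map_mul, map_mul, ha0, hb0]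
      ring
    · intro x y hx hy
      rw [map_add, map_add, hx, hy, add_zero]
  have hD1 := hD _ hcong
  rw [map_sub, map_sub, pderiv_X_self, map_one, hg] at hD1
  rw [mul_comm] at hD1
  rw [pderiv_C_mul, pderiv_X_self, mul_one, constantCoeff_C] at hD1
  have hc : c = 1 := sub_eq_zero.mp hD1
  rw [hg, hc, map_one, mul_one]
end

section
/- (Theorem 2.1(a)) Let K be an algebraically closed field, n ≥ 2, and let φ = (f_1,…,f_n) be a K-algebra automorphism of K[x_1,…,x_n] of degree d ≥ 2 (where f_i = φ(x_i)). Assume the affine part of φ is the identity, i.e., f_i ≡ x_i modulo I² for all i, where I is the ideal generated by x_1,…,x_n, and assume f_1 ≠ x_1. Then the polynomial g_0(x_2,…,x_n) := f_1(0, x_2,…,x_n) obtained by substituting 0 for x_1 in f_1 is nonzero, and g_0 lies in Î², where Î is the ideal of K[x_2,…,x_n] generated by x_2,…,x_n; equivalently, the Î-adic valuation w of g_0 satisfies 2 ≤ w < ∞. -/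
open MvPolynomial

/-- Units of a multivariate polynomial ring over a field are constants. -/
lemma mv_isUnit_eq_C (K : Type*) [Field K] :
    ∀ (m : ℕ) (p : MvPolynomial (Fin m) K), IsUnit p → ∃ c : K, p = C c := by
  intro m
  induction m with
  | zero =>
    intro p _
    obtain ⟨c, rfl⟩ := C_surjective (Fin 0) p
    exact ⟨c, rfl⟩
  | succ m ih =>
    intro p hp
    have h2 : IsUnit (finSuccEquiv K m p) := hp.map (finSuccEquiv K m)
    rw [Polynomial.isUnit_iff] at h2
    obtain ⟨r, hr, hrp⟩ := h2
    obtain ⟨c, rfl⟩ := ih r hr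
    refine ⟨c, ?_⟩
    have := congrArg (finSuccEquiv K m).symm hrp
    rw [(finSuccEquiv K m).symm_apply_apply] at this
    rw [← this]
    have h3 := congrArg (fun f : K →+* MvPolynomial (Fin (m+1)) K => f c)
      (finSuccEquiv_comp_C_eq_C (R := K) m)
    simpa using h3

/-- Elements of `I²` have zero coefficient on the monomial `x₀`. -/
lemma coeff_single_zero_of_mem_sq (K : Type*) [Field K] (n : ℕ)
    (p : MvPolynomial (Fin (n + 2)) K)
    (hp : p ∈ (Ideal.span (Set.range (X : Fin (n + 2) → MvPolynomial (Fin (n + 2)) K))) ^ 2) :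
    coeff (Finsupp.single 0 1) p = 0 := by
  set I : Ideal (MvPolynomial (Fin (n + 2)) K) :=
    Ideal.span (Set.range (X : Fin (n + 2) → MvPolynomial (Fin (n + 2)) K)) with hI
  have hconst : ∀ q ∈ I, constantCoeff q = 0 := by
    intro q hq
    have : I ≤ RingHom.ker (constantCoeff (σ := Fin (n+2)) (R := K)) := by
      rw [hI, Ideal.span_le]
      rintro _ ⟨i, rfl⟩
      simp [RingHom.mem_ker]
    simpa [RingHom.mem_ker] using this hq
  rw [pow_two] at hp
  refine Submodule.mul_induction_on hp ?_ ?_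
  · intro a ha b hb
    rw [MvPolynomial.coeff_mul]
    apply Finset.sum_eq_zero
    rintro ⟨u, v⟩ huv
    rw [Finset.HasAntidiagonal.mem_antidiagonal] at huv
    have hadd : ∀ j : Fin (n+2), u j + v j = if j = 0 then 1 else 0 := by
      intro j
      have h1 := congrArg (fun w : (Fin (n+2) →₀ ℕ) => w j) huv
      simp only [Finsupp.add_apply, Finsupp.single_apply] at h1
      rw [h1]
      by_cases hj : j = 0 <;> simp [hj, eq_comm]
    have h0 : u = 0 ∨ v = 0 := by
      by_cases hu : u 0 = 0
      · left; ext j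
        have h1 := hadd j
        by_cases hj : j = 0
        · subst hj; simpa [hu] using h1
        · simp only [if_neg hj] at h1
          simpa using Nat.eq_zero_of_add_eq_zero_right h1
      · right; ext j
        have h1 := hadd j
        by_cases hj : j = 0
        · subst hj; norm_num at h1
          have : v 0 = 0 := by omega
          simpa using this
        · simp only [if_neg hj] at h1
          simpa using Nat.eq_zero_of_add_eq_zero_left h1
    rcases h0 with h0 | h0
    · have : coeff u a = 0 := by
        rw [h0]; exact hconst a ha
      simp [this]
    · have : coeff v b = 0 := by
        rw [h0]; exact hconst b hb
      simp [this]
  · intro a b ha hb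
    simp [ha, hb]

/-- Theorem 2.1(a): let `φ = (f_1,…,f_n)` be a `K`-algebra automorphism of
`K[x_1,…,x_n]` (`n ≥ 2`, `K` algebraically closed) of degree `d ≥ 2`, whose affine
part is the identity (`f_i ≡ x_i mod I²` for `I = (x_1,…,x_n)`), with `f_1 ≠ x_1`.
Then `g₀ := f_1(0, x_2,…,x_n)` is nonzero and lies in `Î²`, `Î = (x_2,…,x_n)`
(equivalently its `Î`-adic valuation `w` satisfies `2 ≤ w < ∞`). -/
theorem substituted_coordinate_ne_zero_and_val_ge_two
    (K : Type*) [Field K] [IsAlgClosed K] (n : ℕ)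
    (φ : MvPolynomial (Fin (n + 2)) K ≃ₐ[K] MvPolynomial (Fin (n + 2)) K)
    (d : ℕ) (hd2 : 2 ≤ d)
    (hdeg : d = Finset.univ.sup fun i => (φ (X i)).totalDegree)
    (haff : ∀ i, φ (X i) - X i ∈
      (Ideal.span (Set.range (X : Fin (n + 2) → MvPolynomial (Fin (n + 2)) K))) ^ 2)
    (hne : φ (X 0) ≠ X 0)
    (g0 : MvPolynomial (Fin (n + 2)) K)
    (hg0 : g0 = aeval (fun i : Fin (n + 2) => if i = 0 then 0 else X i) (φ (X 0))) :
    g0 ≠ 0 ∧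
      g0 ∈ (Ideal.span ((X : Fin (n + 2) → MvPolynomial (Fin (n + 2)) K) ''
        {i : Fin (n + 2) | i ≠ 0})) ^ 2 := by
  set σ : Fin (n + 2) → MvPolynomial (Fin (n + 2)) K :=
    fun i => if i = 0 then 0 else X i with hσ
  set I : Ideal (MvPolynomial (Fin (n + 2)) K) :=
    Ideal.span (Set.range (X : Fin (n + 2) → MvPolynomial (Fin (n + 2)) K)) with hI
  set J : Ideal (MvPolynomial (Fin (n + 2)) K) :=
    Ideal.span ((X : Fin (n + 2) → MvPolynomial (Fin (n + 2)) K) ''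
      {i : Fin (n + 2) | i ≠ 0}) with hJ
  set f : MvPolynomial (Fin (n + 2)) K := φ (X 0) with hf
  -- Membership part
  have hmem : g0 ∈ J ^ 2 := by
    have h1 : f - X 0 ∈ I ^ 2 := haff 0
    have h2 : aeval σ (f - X 0) ∈ Ideal.map (aeval σ : MvPolynomial (Fin (n+2)) K →ₐ[K] _).toRingHom (I ^ 2) :=
      Ideal.mem_map_of_mem _ h1
    rw [Ideal.map_pow, hI, Ideal.map_span] at h2
    have h3 : Ideal.span ((aeval σ : MvPolynomial (Fin (n+2)) K →ₐ[K] _).toRingHom ''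
        Set.range (X : Fin (n + 2) → MvPolynomial (Fin (n + 2)) K)) ≤ J := by
      rw [Ideal.span_le]
      rintro _ ⟨_, ⟨i, rfl⟩, rfl⟩
      by_cases hi : i = 0
      · simp [hi, hσ, Ideal.zero_mem]
      · have : (aeval σ : MvPolynomial (Fin (n+2)) K →ₐ[K] _).toRingHom (X i) = X i := by
          simp [hσ, hi]
        rw [this]
        exact Ideal.subset_span ⟨i, hi, rfl⟩
    have h4 : (Ideal.span ((aeval σ : MvPolynomial (Fin (n+2)) K →ₐ[K] _).toRingHom ''
        Set.range (X : Fin (n + 2) → MvPolynomial (Fin (n + 2)) K))) ^ 2 ≤ J ^ 2 := by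
      rw [pow_two, pow_two]
      exact Ideal.mul_mono h3 h3
    have h5 := h4 h2
    have h6 : aeval σ (f - X 0) = g0 := by
      rw [map_sub, hg0, hf]
      simp [hσ]
    rwa [h6] at h5
  -- difference lemma: p - aeval σ p ∈ span {X 0}
  have hdiff : ∀ p : MvPolynomial (Fin (n + 2)) K,
      p - aeval σ p ∈ Ideal.span {(X 0 : MvPolynomial (Fin (n + 2)) K)} := by
    intro p
    induction p using MvPolynomial.induction_on with
    | C a => simp [Ideal.zero_mem]
    | add p q hp hq =>
      have : p + q - aeval σ (p + q) = (p - aeval σ p) + (q - aeval σ q) := by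
        rw [map_add]; ring
      rw [this]; exact Ideal.add_mem _ hp hq
    | mul_X p i hp =>
      have heq : p * X i - aeval σ (p * X i)
          = (p - aeval σ p) * X i + aeval σ p * (X i - σ i) := by
        rw [map_mul, aeval_X]; ring
      rw [heq]
      refine Ideal.add_mem _ (Ideal.mul_mem_right _ _ hp) (Ideal.mul_mem_left _ _ ?_)
      by_cases hi : i = 0
      · subst hi
        simp only [hσ, if_pos rfl, sub_zero]
        exact Ideal.subset_span rfl
      · simp [hσ, hi, Ideal.zero_mem]
  -- Nonzero part
  have hprimeX : Prime (X 0 : MvPolynomial (Fin (n + 2)) K) := by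
    rw [← MulEquiv.prime_iff
      ((MvPolynomial.finSuccEquiv K (n + 1)).toRingEquiv.toMulEquiv)]
    have hx : ((MvPolynomial.finSuccEquiv K (n + 1)).toRingEquiv.toMulEquiv)
        (X 0 : MvPolynomial (Fin (n + 2)) K) = Polynomial.X := by
      simpa using finSuccEquiv_X_zero (R := K) (n := n + 1)
    rw [hx]
    exact Polynomial.prime_X
  have hprimef : Prime f := by
    have := (MulEquiv.prime_iff
      (φ.toRingEquiv.toMulEquiv) (p := (X 0 : MvPolynomial (Fin (n + 2)) K)))
    rw [hf]
    exact this.mpr hprimeX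
  have hg0ne : g0 ≠ 0 := by
    intro hzero
    have hfmem : f ∈ Ideal.span {(X 0 : MvPolynomial (Fin (n + 2)) K)} := by
      have := hdiff f
      rw [← hg0, hzero, sub_zero] at this
      exact this
    rw [Ideal.mem_span_singleton] at hfmem
    obtain ⟨h, hfh⟩ := hfmem
    have hirr : Irreducible f := hprimef.irreducible
    rcases hirr.isUnit_or_isUnit hfh with hu | hu
    · exact hprimeX.not_unit hu
    · obtain ⟨c, rfl⟩ := mv_isUnit_eq_C K (n + 2) h hu
      have hc1 : c = 1 := by
        have hm := coeff_single_zero_of_mem_sq K n _ (haff 0)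
        rw [← hf, hfh] at hm
        have heq2 : (X 0 * C c - X 0 : MvPolynomial (Fin (n+2)) K)
            = C (c - 1) * X 0 := by
          rw [map_sub, map_one]; ring
        rw [heq2, MvPolynomial.coeff_C_mul] at hm
        simp only [MvPolynomial.coeff_X, if_true, mul_one] at hm
        exact sub_eq_zero.mp hm
      rw [hc1] at hfh
      simp only [map_one, mul_one] at hfh
      exact hne (hf ▸ hfh)
  exact ⟨hg0ne, hmem⟩
end

section
/- Let K be an algebraically closed field, n ≥ 2, and let φ = (f_1,…,f_n) be a K-algebra automorphism of K[x_1,…,x_n] of degree d ≥ 2 whose affine part is the identity (f_i ≡ x_i mod I², I = (x_1,…,x_n)) and with f_1 ≠ x_1. Let w ≥ 2 be the Î-adic valuation of g_0 := f_1(0,x_2,…,x_n) (where Î = (x_2,…,x_n)) and let h be the homogeneous component of g_0 of degree w. Then, working in K(t)[x_1,…,x_n]: the element t^{−w}·f_1(t^w x_1, t x_2, …, t x_n) lies in the subring K[t][x_1,…,x_n] and is congruent to x_1 + h(x_2,…,x_n) modulo t·K[t][x_1,…,x_n]; and for each i ∈ {2,…,n}, the element t^{−1}·f_i(t^w x_1,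 t x_2, …, t x_n) lies in K[t][x_1,…,x_n] and is congruent to x_i modulo t·K[t][x_1,…,x_n]. -/
open MvPolynomial

namespace CBTaux

lemma fdeg {N : ℕ} (m : Fin N →₀ ℕ) : m.degree = ∑ j, m j := by
  rw [Finsupp.degree]
  exact Finset.sum_subset (Finset.subset_univ _)
    (fun j _ hj => Finsupp.notMem_support_iff.mp hj)

lemma fdeg_add {N : ℕ} (a b : Fin N →₀ ℕ) : (a + b).degree = a.degree + b.degree := by
  simp [fdeg, Finset.sum_add_distrib]

def J (K : Type*) [CommRing K] (N k : ℕ) : Ideal (MvPolynomial (Fin N) K) where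
  carrier := {f | ∀ m : Fin N →₀ ℕ, coeff m f ≠ 0 → k ≤ m.degree}
  zero_mem' := fun m hm => absurd (coeff_zero m) hm
  add_mem' := by
    intro a b ha hb m hm
    by_contra hlt
    apply hm
    have ha' : coeff m a = 0 := by by_contra h0; exact hlt (ha m h0)
    have hb' : coeff m b = 0 := by by_contra h0; exact hlt (hb m h0)
    rw [coeff_add, ha', hb', add_zero]
  smul_mem' := by
    intro c f hf m hm
    by_contra hlt
    push_neg at hlt
    apply hm
    rw [smul_eq_mul, coeff_mul]
    apply Finset.sum_eq_zero
    intro p hp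
    rw [Finset.HasAntidiagonal.mem_antidiagonal] at hp
    have hb : coeff p.2 f = 0 := by
      by_contra h0
      have h1 := hf p.2 h0
      have h2 : p.2.degree ≤ m.degree := by rw [← hp, fdeg_add]; omega
      omega
    rw [hb, mul_zero]

variable {K : Type*} [CommRing K] {N : ℕ}

lemma mem_J {k : ℕ} {f : MvPolynomial (Fin N) K} :
    f ∈ J K N k ↔ ∀ m : Fin N →₀ ℕ, coeff m f ≠ 0 → k ≤ m.degree := Iff.rfl

lemma J_mul_le (a b : ℕ) : (J K N a) * J K N b ≤ J K N (a + b) := by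
  rw [Ideal.mul_le]
  intro r hr s hs
  rw [mem_J]
  intro m hm
  rw [coeff_mul] at hm
  obtain ⟨p, hp, hne⟩ := Finset.exists_ne_zero_of_sum_ne_zero hm
  rw [Finset.HasAntidiagonal.mem_antidiagonal] at hp
  have h1 := hr p.1 (left_ne_zero_of_mul hne)
  have h2 := hs p.2 (right_ne_zero_of_mul hne)
  rw [← hp, fdeg_add]; omega

lemma J_pow_le (k : ℕ) : (J K N 1) ^ k ≤ J K N k := by
  induction k with
  | zero => intro f _; rw [mem_J]; intro m _; omega
  | succ k ih =>
    calc (J K N 1) ^ (k + 1) = J K N 1 ^ k * J K N 1 := pow_succ _ _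
    _ ≤ J K N k * J K N 1 := Ideal.mul_mono_left ih
    _ ≤ J K N (k + 1) := J_mul_le k 1

lemma X_mem_J1 (j : Fin N) : (X j : MvPolynomial (Fin N) K) ∈ J K N 1 := by
  rw [mem_J]
  intro m hm
  rw [coeff_X'] at hm
  by_cases hsm : Finsupp.single j 1 = m
  · subst hsm; simp [fdeg, Finsupp.single_apply]
  · simp [hsm] at hm

def wt (n w : ℕ) (m : Fin (n + 2) →₀ ℕ) : ℕ := ∑ j, m j * (if j = 0 then w else 1)

variable {n w : ℕ}

lemma deg_le_wt (hw : 1 ≤ w) (m : Fin (n + 2) →₀ ℕ) : m.degree ≤ wt n w m := by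
  rw [fdeg, wt]
  apply Finset.sum_le_sum
  intro j _
  have h1 : 1 ≤ if j = 0 then w else 1 := by split <;> omega
  calc m j = m j * 1 := (mul_one _).symm
  _ ≤ m j * (if j = 0 then w else 1) := Nat.mul_le_mul_left _ h1

lemma zero_mul_le_wt (m : Fin (n + 2) →₀ ℕ) : m 0 * w ≤ wt n w m := by
  rw [wt]
  have := Finset.single_le_sum (f := fun j => m j * (if j = (0 : Fin (n + 2)) then w else 1))
    (fun j _ => Nat.zero_le _) (Finset.mem_univ 0)
  simpa using this

lemma wt_split (m : Fin (n + 2) →₀ ℕ) :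
    wt n w m = m 0 * w + ∑ j ∈ Finset.univ.erase 0, m j := by
  rw [wt, ← Finset.add_sum_erase _ _ (Finset.mem_univ (0 : Fin (n + 2)))]
  simp only [if_pos rfl]
  congr 1
  apply Finset.sum_congr rfl
  intro j hj
  rw [if_neg (Finset.ne_of_mem_erase hj), mul_one]

lemma wt_of_zero' {m : Fin (n + 2) →₀ ℕ} (h0 : m 0 = 0) : wt n w m = m.degree := by
  rw [wt_split, h0, zero_mul, zero_add, fdeg]
  rw [← Finset.add_sum_erase _ _ (Finset.mem_univ (0 : Fin (n + 2))), h0, zero_add]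

lemma wt_single (j : Fin (n + 2)) :
    wt n w (Finsupp.single j 1) = if j = 0 then w else 1 := by
  rw [wt]
  rw [Finset.sum_eq_single j]
  · simp
  · intro b _ hb; rw [Finsupp.single_apply, if_neg (Ne.symm hb), zero_mul]
  · intro hb; exact absurd (Finset.mem_univ j) hb

lemma wt_eq_w (hw : 2 ≤ w) {m : Fin (n + 2) →₀ ℕ} (hwt : wt n w m = w) (h0 : m 0 ≠ 0) :
    m = Finsupp.single 0 1 := by
  rw [wt_split] at hwt
  have hm0 : m 0 = 1 := by
    by_contra hne
    have h1 : 1 ≤ m 0 := Nat.one_le_iff_ne_zero.mpr h0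
    have h2 : 2 ≤ m 0 := by omega
    have h3 : 2 * w ≤ m 0 * w := Nat.mul_le_mul_right w h2
    omega
  rw [hm0, one_mul] at hwt
  have hs : ∑ j ∈ Finset.univ.erase 0, m j = 0 := by omega
  ext j
  by_cases hj : j = 0
  · subst hj; rw [hm0, Finsupp.single_apply, if_pos rfl]
  · rw [Finsupp.single_apply, if_neg (Ne.symm hj)]
    exact Finset.sum_eq_zero_iff.mp hs j (Finset.mem_erase.mpr ⟨hj, Finset.mem_univ j⟩)

end CBTaux

namespace CBTaux2
open CBTaux

variable {K : Type*} [CommSemiring K] {n w : ℕ}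

lemma coeff_subst0 (f : MvPolynomial (Fin (n + 2)) K) (m : Fin (n + 2) →₀ ℕ) :
    coeff m (aeval (fun i : Fin (n + 2) => if i = 0 then 0 else X i) f)
      = if m 0 = 0 then coeff m f else 0 := by
  classical
  have key : aeval (fun i : Fin (n + 2) => if i = 0 then 0 else X i) f
      = ∑ m ∈ f.support.filter (fun m => m 0 = 0), monomial m (coeff m f) := by
    conv_lhs => rw [as_sum f]
    rw [map_sum, Finset.sum_filter]
    apply Finset.sum_congr rfl
    intro v hv
    rw [aeval_monomial]
    by_cases h0 : v 0 = 0
    · rw [if_pos h0]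
      have hp : (v.prod fun j e => (if j = 0 then (0 : MvPolynomial (Fin (n + 2)) K) else X j) ^ e)
          = v.prod fun j e => X j ^ e := by
        apply Finsupp.prod_congr
        intro j hj
        rw [if_neg]
        intro hj0
        subst hj0
        exact (Finsupp.mem_support_iff.mp hj) h0
      rw [hp, algebraMap_eq, ← monomial_eq]
    · rw [if_neg h0]
      have h0' : (0 : Fin (n + 2)) ∈ v.support := Finsupp.mem_support_iff.mpr h0
      rw [Finsupp.prod, Finset.prod_eq_zero h0' (by simp [zero_pow h0]), mul_zero]
  rw [key, coeff_sum]
  simp only [coeff_monomial]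
  rw [Finset.sum_ite_eq' (f.support.filter (fun m => m 0 = 0)) m (fun v => coeff v f)]
  by_cases h0 : m 0 = 0
  · rw [if_pos h0]
    by_cases hc : coeff m f = 0
    · simp [hc]
    · rw [if_pos (Finset.mem_filter.mpr ⟨mem_support_iff.mpr hc, h0⟩)]
  · rw [if_neg h0, if_neg]
    intro hmem
    exact h0 (Finset.mem_filter.mp hmem).2

lemma G_monomial (m : Fin (n + 2) →₀ ℕ) (c : K) :
    eval₂Hom ((C : Polynomial K →+* MvPolynomial (Fin (n + 2)) (Polynomial K)).comp
        (Polynomial.C : K →+* Polynomial K))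
      (fun j : Fin (n + 2) => C ((Polynomial.X : Polynomial K) ^ (if j = 0 then w else 1)) * X j)
      (monomial m c)
      = monomial m (Polynomial.C c * Polynomial.X ^ wt n w m) := by
  classical
  rw [coe_eval₂Hom] at *
  rw [eval₂_monomial]
  have hsum : ∑ j ∈ m.support, (if j = (0 : Fin (n + 2)) then w else 1) * m j = wt n w m := by
    rw [wt]
    rw [Finset.sum_subset (Finset.subset_univ m.support)
      (fun j _ hj => by rw [Finsupp.notMem_support_iff.mp hj, mul_zero])]
    exact Finset.sum_congr rfl fun j _ => mul_comm _ _
  have hprod : (m.prod fun j e =>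
        (C ((Polynomial.X : Polynomial K) ^ (if j = 0 then w else 1)) * X j) ^ e)
      = C ((Polynomial.X : Polynomial K) ^ wt n w m) * m.prod fun j e => X j ^ e := by
    rw [Finsupp.prod, Finsupp.prod]
    calc (∏ j ∈ m.support,
          (C ((Polynomial.X : Polynomial K) ^ (if j = 0 then w else 1)) * X j) ^ m j)
        = ∏ j ∈ m.support,
            (C ((Polynomial.X : Polynomial K) ^ ((if j = 0 then w else 1) * m j)) * X j ^ m j) := by
          apply Finset.prod_congr rfl
          intro j _
          rw [mul_pow, ← C_pow, ← pow_mul]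
    _ = (∏ j ∈ m.support, C ((Polynomial.X : Polynomial K) ^ ((if j = 0 then w else 1) * m j)))
          * ∏ j ∈ m.support, X j ^ m j := Finset.prod_mul_distrib
    _ = C ((Polynomial.X : Polynomial K) ^ wt n w m) * ∏ j ∈ m.support, X j ^ m j := by
          rw [← map_prod, Finset.prod_pow_eq_pow_sum, hsum]
  rw [hprod, monomial_eq, RingHom.comp_apply, map_mul]
  ring

end CBTaux2

open CBTaux CBTaux2 in
/-- With `φ` as in Theorem 2.1 (affine part the identity, `f_1 ≠ x_1`, degree `d ≥ 2`),
`w ≥ 2` the `Î`-adic valuation of `g₀ := f_1(0, x_2,…,x_n)` and `h` the homogeneous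
component of `g₀` of degree `w`, the element `t^{-w}·f_1(t^w x_1, t x_2,…, t x_n)` of
`K(t)[x_1,…,x_n]` lies in `K[t][x_1,…,x_n]` and is congruent to `x_1 + h` modulo
`t·K[t][x_1,…,x_n]`, and for `i ≥ 2` the element `t^{-1}·f_i(t^w x_1, t x_2,…, t x_n)`
lies in `K[t][x_1,…,x_n]` and is congruent to `x_i` modulo `t·K[t][x_1,…,x_n]`. -/
theorem conjugate_by_torus_integral_and_congruent
    (K : Type*) [Field K] [IsAlgClosed K] (n : ℕ)
    (φ : MvPolynomial (Fin (n + 2)) K ≃ₐ[K] MvPolynomial (Fin (n + 2)) K)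
    (d : ℕ) (hd2 : 2 ≤ d)
    (hdeg : d = Finset.univ.sup fun i => (φ (X i)).totalDegree)
    (haff : ∀ i, φ (X i) - X i ∈
      (Ideal.span (Set.range (X : Fin (n + 2) → MvPolynomial (Fin (n + 2)) K))) ^ 2)
    (hne : φ (X 0) ≠ X 0)
    (g0 : MvPolynomial (Fin (n + 2)) K)
    (hg0 : g0 = aeval (fun i : Fin (n + 2) => if i = 0 then 0 else X i) (φ (X 0)))
    (w : ℕ) (hw2 : 2 ≤ w)
    (hw : g0 ∈ (Ideal.span ((X : Fin (n + 2) → MvPolynomial (Fin (n + 2)) K) ''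
          {i : Fin (n + 2) | i ≠ 0})) ^ w ∧
        g0 ∉ (Ideal.span ((X : Fin (n + 2) → MvPolynomial (Fin (n + 2)) K) ''
          {i : Fin (n + 2) | i ≠ 0})) ^ (w + 1))
    (h : MvPolynomial (Fin (n + 2)) K) (hh : h = homogeneousComponent w g0)
    -- `F` is the substitution `x_1 ↦ t^w x_1`, `x_i ↦ t x_i` (`i ≥ 2`) into `K(t)[x_1,…,x_n]`
    (F : MvPolynomial (Fin (n + 2)) K →+* MvPolynomial (Fin (n + 2)) (RatFunc K))
    (hF : F = eval₂Hom ((C : RatFunc K →+* MvPolynomial (Fin (n + 2)) (RatFunc K)).comp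
        (algebraMap K (RatFunc K)))
      (fun j : Fin (n + 2) => C ((RatFunc.X : RatFunc K) ^ if j = 0 then w else 1) * X j)) :
    ∀ i : Fin (n + 2), ∃ q : MvPolynomial (Fin (n + 2)) (Polynomial K),
      MvPolynomial.map (algebraMap (Polynomial K) (RatFunc K)) q
          = C ((RatFunc.X : RatFunc K)⁻¹ ^ if i = 0 then w else 1) * F (φ (X i)) ∧
      q - (if i = 0 then X 0 + MvPolynomial.map (Polynomial.C : K →+* Polynomial K) h else X i)
          ∈ Ideal.span {(C (Polynomial.X : Polynomial K) :
              MvPolynomial (Fin (n + 2)) (Polynomial K))} := by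
  classical
  intro i
  set k : ℕ := if i = 0 then w else 1 with hk
  have hk1 : 1 ≤ k := by rw [hk]; split <;> omega
  have hw1 : 1 ≤ w := by omega
  -- low-degree coefficients of `φ (X i') - X i'` vanish
  have hI2 : ∀ i' : Fin (n + 2), ∀ m : Fin (n + 2) →₀ ℕ,
      coeff m (φ (X i') - X i') ≠ 0 → 2 ≤ m.degree := by
    intro i'
    have hspan1 : Ideal.span (Set.range (X : Fin (n + 2) → MvPolynomial (Fin (n + 2)) K))
        ≤ J K (n + 2) 1 := by
      rw [Ideal.span_le]
      rintro _ ⟨j, rfl⟩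
      exact X_mem_J1 j
    have h2 : (Ideal.span (Set.range (X : Fin (n + 2) → MvPolynomial (Fin (n + 2)) K))) ^ 2
        ≤ J K (n + 2) 2 :=
      le_trans (Ideal.pow_right_mono hspan1 2) (J_pow_le 2)
    exact (mem_J).mp (h2 (haff i'))
  -- monomials of g0 have degree ≥ w
  have hg0d : ∀ m : Fin (n + 2) →₀ ℕ, coeff m g0 ≠ 0 → w ≤ m.degree := by
    have hspanI : Ideal.span ((X : Fin (n + 2) → MvPolynomial (Fin (n + 2)) K) ''
        {i : Fin (n + 2) | i ≠ 0}) ≤ J K (n + 2) 1 := by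
      rw [Ideal.span_le]
      rintro _ ⟨j, -, rfl⟩
      exact X_mem_J1 j
    exact (mem_J).mp (le_trans (Ideal.pow_right_mono hspanI w) (J_pow_le w) hw.1)
  have hg0c : ∀ m : Fin (n + 2) →₀ ℕ,
      coeff m g0 = if m 0 = 0 then coeff m (φ (X 0)) else 0 := by
    intro m; rw [hg0]; exact coeff_subst0 _ m
  -- all monomials of φ (X i) have weight ≥ k
  have hL1 : ∀ m : Fin (n + 2) →₀ ℕ, coeff m (φ (X i)) ≠ 0 → k ≤ wt n w m := by
    intro m hm
    rw [hk]
    by_cases hi : i = 0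
    · rw [if_pos hi]
      rw [hi] at hm
      by_cases h0 : m 0 = 0
      · have hg : coeff m g0 ≠ 0 := by rw [hg0c, if_pos h0]; exact hm
        exact le_trans (hg0d m hg) (deg_le_wt hw1 m)
      · have h1 : 1 ≤ m 0 := Nat.one_le_iff_ne_zero.mpr h0
        calc w = 1 * w := (one_mul w).symm
        _ ≤ m 0 * w := Nat.mul_le_mul_right w h1
        _ ≤ wt n w m := zero_mul_le_wt m
    · rw [if_neg hi]
      have hm0 : m ≠ 0 := by
        rintro rfl
        apply hm
        have h1 : coeff 0 (φ (X i) - X i) = 0 := by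
          by_contra hc
          have h2 := hI2 i 0 hc
          simp [Finsupp.degree] at h2
        rw [coeff_sub, coeff_zero_X, sub_zero] at h1
        exact h1
      have hd1 : 1 ≤ m.degree := by
        rcases Nat.eq_zero_or_pos m.degree with h0 | h0
        · exact absurd ((Finsupp.degree_eq_zero_iff m).mp h0) hm0
        · exact h0
      exact le_trans hd1 (deg_le_wt hw1 m)
  -- the candidate q
  set q : MvPolynomial (Fin (n + 2)) (Polynomial K) :=
    ∑ m ∈ (φ (X i)).support,
      monomial m (Polynomial.C (coeff m (φ (X i))) * Polynomial.X ^ (wt n w m - k)) with hq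
  refine ⟨q, ?_, ?_⟩
  · -- integrality and identification with C (X⁻¹ ^ k) * F (φ (X i))
    set G : MvPolynomial (Fin (n + 2)) K →+* MvPolynomial (Fin (n + 2)) (Polynomial K) :=
      eval₂Hom ((C : Polynomial K →+* MvPolynomial (Fin (n + 2)) (Polynomial K)).comp
          (Polynomial.C : K →+* Polynomial K))
        (fun j : Fin (n + 2) =>
          C ((Polynomial.X : Polynomial K) ^ (if j = 0 then w else 1)) * X j) with hG
    have hGf : G (φ (X i)) = C ((Polynomial.X : Polynomial K) ^ k) * q := by
      conv_lhs => rw [as_sum (φ (X i))]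
      rw [map_sum, hq, Finset.mul_sum]
      apply Finset.sum_congr rfl
      intro m hm
      rw [hG, G_monomial, C_mul_monomial]
      congr 1
      have hkm : k ≤ wt n w m := hL1 m (mem_support_iff.mp hm)
      calc Polynomial.C (coeff m (φ (X i))) * Polynomial.X ^ wt n w m
          = Polynomial.C (coeff m (φ (X i)))
            * (Polynomial.X ^ k * Polynomial.X ^ (wt n w m - k)) := by
            rw [← pow_add, Nat.add_sub_cancel' hkm]
      _ = Polynomial.X ^ k * (Polynomial.C (coeff m (φ (X i))) * Polynomial.X ^ (wt n w m - k)) := by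
            ring
    have hcomp : (MvPolynomial.map (algebraMap (Polynomial K) (RatFunc K))).comp G = F := by
      rw [hF, hG]
      apply MvPolynomial.ringHom_ext
      · intro a
        rw [RingHom.comp_apply, eval₂Hom_C, eval₂Hom_C, RingHom.comp_apply, RingHom.comp_apply,
          map_C, IsScalarTower.algebraMap_apply K (Polynomial K) (RatFunc K),
          Polynomial.algebraMap_eq]
      · intro j
        rw [RingHom.comp_apply, eval₂Hom_X', eval₂Hom_X', map_mul, map_C, map_X, map_pow,
          RatFunc.algebraMap_X]
    have h1 : F (φ (X i)) = C ((RatFunc.X : RatFunc K) ^ k)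
        * MvPolynomial.map (algebraMap (Polynomial K) (RatFunc K)) q := by
      rw [← hcomp, RingHom.comp_apply, hGf, map_mul, map_C, map_pow, RatFunc.algebraMap_X]
    rw [h1, ← mul_assoc, ← map_mul, ← mul_pow, inv_mul_cancel₀ RatFunc.X_ne_zero, one_pow,
      map_one, one_mul]
  · -- congruence modulo t
    set wp : MvPolynomial (Fin (n + 2)) K :=
      ∑ m ∈ (φ (X i)).support.filter (fun m => wt n w m = k), monomial m (coeff m (φ (X i)))
      with hwp
    have hqwp : q - MvPolynomial.map (Polynomial.C : K →+* Polynomial K) wp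
        ∈ Ideal.span {(C (Polynomial.X : Polynomial K) :
            MvPolynomial (Fin (n + 2)) (Polynomial K))} := by
      have hsplit : q = MvPolynomial.map (Polynomial.C : K →+* Polynomial K) wp
          + ∑ m ∈ (φ (X i)).support.filter (fun m => ¬ wt n w m = k),
              monomial m (Polynomial.C (coeff m (φ (X i))) * Polynomial.X ^ (wt n w m - k)) := by
        rw [hq, ← Finset.sum_filter_add_sum_filter_not (φ (X i)).support
          (fun m => wt n w m = k)]
        congr 1
        rw [hwp, map_sum]
        apply Finset.sum_congr rfl
        intro m hm
        rw [map_monomial]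
        have hz : wt n w m - k = 0 := by rw [(Finset.mem_filter.mp hm).2]; omega
        rw [hz, pow_zero, mul_one]
      rw [hsplit, add_sub_cancel_left]
      apply Ideal.sum_mem
      intro m hm
      rw [Ideal.mem_span_singleton]
      have hkm : k ≤ wt n w m := hL1 m (mem_support_iff.mp (Finset.mem_filter.mp hm).1)
      have hne' : wt n w m ≠ k := (Finset.mem_filter.mp hm).2
      obtain ⟨e, he⟩ : ∃ e, wt n w m - k = e + 1 := ⟨wt n w m - k - 1, by omega⟩
      refine ⟨monomial m (Polynomial.C (coeff m (φ (X i))) * Polynomial.X ^ e), ?_⟩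
      rw [C_mul_monomial]
      congr 1
      rw [he, pow_succ]
      ring
    have hwpc : ∀ m : Fin (n + 2) →₀ ℕ,
        coeff m wp = if wt n w m = k then coeff m (φ (X i)) else 0 := by
      intro m
      rw [hwp, coeff_sum]
      simp only [coeff_monomial]
      rw [Finset.sum_ite_eq' _ m (fun v => coeff v (φ (X i)))]
      by_cases hc : wt n w m = k
      · rw [if_pos hc]
        by_cases hz : coeff m (φ (X i)) = 0
        · simp [hz]
        · rw [if_pos (Finset.mem_filter.mpr ⟨mem_support_iff.mpr hz, hc⟩)]
      · rw [if_neg hc, if_neg]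
        intro hmem
        exact hc (Finset.mem_filter.mp hmem).2
    have hwpT : wp = if i = 0 then X 0 + h else X i := by
      by_cases hi : i = 0
      · rw [if_pos hi]
        apply MvPolynomial.ext
        intro m
        rw [hwpc, coeff_add, hh, coeff_homogeneousComponent, hi]
        have hk' : k = w := by rw [hk, if_pos hi]
        rw [hk']
        by_cases hwm : wt n w m = w
        · rw [if_pos hwm]
          by_cases h0 : m 0 = 0
          · have hdm : m.degree = w := by rw [← wt_of_zero' h0, hwm]
            rw [if_pos hdm, hg0c, if_pos h0, coeff_X', if_neg, zero_add]
            intro hsm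
            have : m 0 = 1 := by rw [← hsm]; simp
            omega
          · have hm1 : m = Finsupp.single 0 1 := wt_eq_w hw2 hwm h0
            have hdm : m.degree ≠ w := by
              rw [hm1]
              simp [fdeg, Finsupp.single_apply]
              omega
            rw [if_neg hdm, add_zero, coeff_X', if_pos hm1.symm]
            have hc0 : coeff m (φ (X 0) - X 0) = 0 := by
              by_contra hc
              have h2 := hI2 0 m hc
              rw [hm1] at h2
              simp [fdeg, Finsupp.single_apply] at h2
            rw [coeff_sub, sub_eq_zero] at hc0
            rw [hc0, coeff_X', if_pos hm1.symm]
        · rw [if_neg hwm]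
          have hx0 : coeff m (X 0 : MvPolynomial (Fin (n + 2)) K) = 0 := by
            rw [coeff_X', if_neg]
            intro hsm
            apply hwm
            rw [← hsm, wt_single, if_pos rfl]
          rw [hx0, zero_add]
          by_cases hdm : m.degree = w
          · rw [if_pos hdm, hg0c, if_neg]
            intro h0
            exact hwm (by rw [wt_of_zero' h0, hdm])
          · rw [if_neg hdm]
      · rw [if_neg hi]
        apply MvPolynomial.ext
        intro m
        rw [hwpc]
        have hk' : k = 1 := by rw [hk, if_neg hi]
        rw [hk']
        by_cases hwm : wt n w m = 1
        · rw [if_pos hwm]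
          have hc0 : coeff m (φ (X i) - X i) = 0 := by
            by_contra hc
            have h2 := hI2 i m hc
            have h3 := deg_le_wt hw1 m
            omega
          rw [coeff_sub, sub_eq_zero] at hc0
          exact hc0
        · rw [if_neg hwm, eq_comm, coeff_X', if_neg]
          intro hsm
          apply hwm
          rw [← hsm, wt_single, if_neg hi]
    have hTmap : (if i = 0 then X 0 + MvPolynomial.map (Polynomial.C : K →+* Polynomial K) h
          else (X i : MvPolynomial (Fin (n + 2)) (Polynomial K)))
        = MvPolynomial.map (Polynomial.C : K →+* Polynomial K) (if i = 0 then X 0 + h else X i)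
        := by
      by_cases hi : i = 0
      · rw [if_pos hi, if_pos hi, map_add, map_X]
      · rw [if_neg hi, if_neg hi, map_X]
    rw [hTmap, ← hwpT]
    exact hqwp
end

section
/- (Theorem 2.1(b), family form) Let K be an algebraically closed field, n ≥ 2, and let φ = (f_1,…,f_n) be a K-algebra automorphism of K[x_1,…,x_n] of degree d ≥ 2 whose affine part is the identity and with f_1 ≠ x_1. Let w ≥ 2 be the Î-adic valuation of g_0 := f_1(0,x_2,…,x_n) and h the homogeneous component of g_0 of degree w. Then there exists a K[t]-algebra automorphism Φ of K[t][x_1,…,x_n] with Φ(x_1) = t^{−w} f_1(t^w x_1, t x_2,…, t x_n) and Φ(x_i) = t^{−1} f_i(t^w x_1, t x_2,…, t x_n) for i ≥ 2, such that: (i) for every t_0 ∈ K×, the K-algebra automorphism of K[x_1,…,x_n] obtained by specializing t to t_0 equals α_{t_0}^{−1} ∘ φ ∘ α_{t_0} (the conjugate of φ by the linear automorphism α_{t_0}: x_1 ↦ t_0^w x_1, x_i ↦ t_0 x_i for i ≥ 2) and has degree at most d; (ii) the specialization of Φ at t = 0 is the automorphism x_1 ↦ x_1 + h(x_2,…,x_n),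 x_i ↦ x_i (i ≥ 2), which also has degree at most d. -/
open MvPolynomial

namespace Aux
variable {σ : Type*} {K : Type*} [Field K]

/-- weighted degree of a monomial exponent -/
def wdeg (u : σ → ℕ) (m : σ →₀ ℕ) : ℕ := m.sum fun j k => u j * k

lemma wdeg_add (u : σ → ℕ) (a b : σ →₀ ℕ) : wdeg u (a + b) = wdeg u a + wdeg u b := by
  unfold wdeg
  exact Finsupp.sum_add_index' (fun _ => by simp) (fun a b₁ b₂ => by ring)

lemma wdeg_single (u : σ → ℕ) (j : σ) : wdeg u (Finsupp.single j 1) = u j := by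
  unfold wdeg
  rw [Finsupp.sum_single_index] <;> simp

lemma wdeg_mono {u v : σ → ℕ} (huv : ∀ j, u j ≤ v j) (m : σ →₀ ℕ) :
    wdeg u m ≤ wdeg v m :=
  Finset.sum_le_sum fun j _ => Nat.mul_le_mul_right _ (huv j)

lemma degree_eq_wdeg (m : σ →₀ ℕ) : m.degree = wdeg (fun _ => 1) m := by
  unfold wdeg Finsupp.degree
  simp [Finsupp.sum]
  rfl

/-- monomials of elements of a power of the ideal generated by some variables
have large weighted degree -/
lemma wdeg_ge_of_mem_span_pow [DecidableEq σ] (S : Set σ) (u : σ → ℕ) (hu : ∀ j ∈ S, 1 ≤ u j) :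
    ∀ (k : ℕ) (p : MvPolynomial σ K),
      p ∈ (Ideal.span ((X : σ → MvPolynomial σ K) '' S)) ^ k →
      ∀ m ∈ p.support, k ≤ wdeg u m := by
  have base : ∀ p : MvPolynomial σ K, p ∈ Ideal.span ((X : σ → MvPolynomial σ K) '' S) →
      ∀ m ∈ p.support, 1 ≤ wdeg u m := by
    intro p hp
    refine Submodule.span_induction ?_ ?_ ?_ ?_ hp
    · rintro x ⟨j, hj, rfl⟩ m hm
      rw [support_X] at hm
      simp only [Finset.mem_singleton] at hm
      subst hm
      rw [wdeg_single]; exact hu j hj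
    · simp
    · intro x y _ _ hx hy m hm
      rcases Finset.mem_union.1 (support_add hm) with h | h
      exacts [hx m h, hy m h]
    · intro r x _ hx m hm
      rw [smul_eq_mul] at hm
      rcases Finset.mem_add.1 (support_mul _ _ hm) with ⟨a, ha, b, hb, rfl⟩
      calc 1 ≤ wdeg u b := hx b hb
      _ ≤ wdeg u a + wdeg u b := Nat.le_add_left _ _
      _ = wdeg u (a + b) := (wdeg_add u a b).symm
  intro k
  induction k with
  | zero => intro p _ m _; exact Nat.zero_le _
  | succ k ih =>
    intro p hp
    rw [pow_succ] at hp
    refine Submodule.mul_induction_on hp ?_ ?_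
    · intro a ha b hb m hm
      rcases Finset.mem_add.1 (support_mul _ _ hm) with ⟨m₁, h₁, m₂, h₂, rfl⟩
      rw [wdeg_add]
      exact Nat.add_le_add (ih a ha m₁ h₁) (base b hb m₂ h₂)
    · intro x y hx hy m hm
      rcases Finset.mem_union.1 (support_add hm) with h | h
      exacts [hx m h, hy m h]

lemma coeff_sum_monomial' [DecidableEq σ] {R : Type*} [CommSemiring R] (S : Finset (σ →₀ ℕ))
    (c : (σ →₀ ℕ) → R) (m : σ →₀ ℕ) :
    coeff m (∑ m' ∈ S, monomial m' (c m')) = if m ∈ S then c m else 0 := by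
  rw [coeff_sum, Finset.sum_congr rfl (fun m' _ => coeff_monomial m m' (c m'))]
  simp [Finset.sum_ite_eq]

noncomputable def twist (p : MvPolynomial σ K) (e : (σ →₀ ℕ) → ℕ) :
    MvPolynomial σ (Polynomial K) :=
  ∑ m ∈ p.support, monomial m (Polynomial.C (coeff m p) * Polynomial.X ^ e m)

lemma coeff_twist [DecidableEq σ] (p : MvPolynomial σ K) (e : (σ →₀ ℕ) → ℕ) (m : σ →₀ ℕ) :
    coeff m (twist p e) = Polynomial.C (coeff m p) * Polynomial.X ^ e m := by
  rw [twist, coeff_sum_monomial']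
  split
  · rfl
  · next hm => rw [notMem_support_iff.1 hm]; simp

lemma map_twist {L : Type*} [CommSemiring L] (τ : Polynomial K →+* L)
    (p : MvPolynomial σ K) (e : (σ →₀ ℕ) → ℕ) :
    map τ (twist p e)
      = ∑ m ∈ p.support, monomial m (τ (Polynomial.C (coeff m p)) * τ Polynomial.X ^ e m) := by
  rw [twist, map_sum]
  exact Finset.sum_congr rfl fun m _ => by rw [map_monomial, map_mul, map_pow]

lemma eval₂_scale_monomial {R L : Type*} [CommSemiring R] [CommSemiring L] (ι : R →+* L)
    (u : σ → L) (m : σ →₀ ℕ) (c : R) :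
    eval₂ ((C : L →+* MvPolynomial σ L).comp ι) (fun j => C (u j) * X j) (monomial m c)
      = monomial m (ι c * m.prod fun j k => u j ^ k) := by
  rw [eval₂_monomial, monomial_eq]
  have h1 : (m.prod fun j k => (C (u j) * X j) ^ k)
      = C (m.prod fun j k => u j ^ k) * m.prod fun j k => (X j : MvPolynomial σ L) ^ k := by
    rw [Finsupp.prod, Finsupp.prod, Finsupp.prod, map_prod, ← Finset.prod_mul_distrib]
    exact Finset.prod_congr rfl fun j _ => by rw [mul_pow, map_pow]
  rw [h1, RingHom.comp_apply, ← mul_assoc, ← C_mul]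

lemma aeval_scale_monomial {L : Type*} [CommSemiring L] (u : σ → L) (m : σ →₀ ℕ) (c : L) :
    aeval (fun j => C (u j) * X j) (monomial m c)
      = monomial m (c * m.prod fun j k => u j ^ k) := by
  have h := eval₂_scale_monomial (RingHom.id L) u m c
  rw [RingHom.comp_id] at h
  rw [aeval_def, algebraMap_eq]
  exact h

lemma prod_pow_wdeg {L : Type*} [CommSemiring L] (t : L) (u : σ → ℕ) (m : σ →₀ ℕ) :
    (m.prod fun j k => (t ^ u j) ^ k) = t ^ wdeg u m := by
  rw [Finsupp.prod]
  simp_rw [← pow_mul]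
  rw [Finset.prod_pow_eq_pow_sum]
  rfl

noncomputable def scaleEquiv (L : Type*) [Field L] (s : σ → L) (hs : ∀ j, s j ≠ 0) :
    MvPolynomial σ L ≃ₐ[L] MvPolynomial σ L :=
  AlgEquiv.ofAlgHom (aeval fun j => C (s j) * X j) (aeval fun j => C (s j)⁻¹ * X j)
    (by
      apply MvPolynomial.algHom_ext
      intro i
      simp only [AlgHom.comp_apply, AlgHom.id_apply, aeval_X, map_mul, aeval_C, algebraMap_eq]
      rw [← mul_assoc, ← C_mul, inv_mul_cancel₀ (hs i), C_1, one_mul])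
    (by
      apply MvPolynomial.algHom_ext
      intro i
      simp only [AlgHom.comp_apply, AlgHom.id_apply, aeval_X, map_mul, aeval_C, algebraMap_eq]
      rw [← mul_assoc, ← C_mul, mul_inv_cancel₀ (hs i), C_1, one_mul])

lemma scaleEquiv_X (L : Type*) [Field L] (s : σ → L) (hs : ∀ j, s j ≠ 0) (i : σ) :
    scaleEquiv L s hs (X i) = C (s i) * X i := by
  show (aeval fun j => C (s j) * X j) (X i) = _
  rw [aeval_X]

lemma scaleEquiv_symm_apply (L : Type*) [Field L] (s : σ → L) (hs : ∀ j, s j ≠ 0)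
    (p : MvPolynomial σ L) :
    (scaleEquiv L s hs).symm p = aeval (fun j => C (s j)⁻¹ * X j) p := by
  simp [scaleEquiv]

lemma map_aeval_comm {R L : Type*} [CommSemiring R] [CommSemiring L] (ι : R →+* L)
    (G : σ → MvPolynomial σ R) (p : MvPolynomial σ R) :
    map ι (aeval G p) = aeval (fun j => map ι (G j)) (map ι p) := by
  have key : ((map ι : MvPolynomial σ R →+* MvPolynomial σ L)).comp
        ((aeval G : MvPolynomial σ R →ₐ[R] MvPolynomial σ R) :
          MvPolynomial σ R →+* MvPolynomial σ R)
      = ((aeval (fun j => map ι (G j)) : MvPolynomial σ L →ₐ[L] MvPolynomial σ L) :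
          MvPolynomial σ L →+* MvPolynomial σ L).comp (map ι) := by
    apply ringHom_ext
    · intro r
      simp [map_C, aeval_C, algebraMap_eq]
    · intro i
      simp [map_X, aeval_X]
  exact (RingHom.congr_fun key p)

lemma aeval_map_comm {L : Type*} [CommRing L] (ι : K →+* L)
    (ψ : MvPolynomial σ K →ₐ[K] MvPolynomial σ K) (p : MvPolynomial σ K) :
    aeval (fun j => map ι (ψ (X j))) (map ι p) = map ι (ψ p) := by
  have key : ((aeval fun j => map ι (ψ (X j)) : MvPolynomial σ L →ₐ[L] MvPolynomial σ L) :
        MvPolynomial σ L →+* MvPolynomial σ L).comp (map ι)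
      = (map ι : MvPolynomial σ K →+* MvPolynomial σ L).comp ψ.toRingHom := by
    apply ringHom_ext
    · intro r
      simp only [RingHom.comp_apply, map_C, AlgHom.toRingHom_eq_coe, RingHom.coe_coe]
      rw [show (C r : MvPolynomial σ K) = algebraMap K _ r from rfl, AlgHom.commutes]
      simp [algebraMap_eq, aeval_C, map_C]
    · intro i
      simp [map_X, aeval_X]
  exact RingHom.congr_fun key p

noncomputable def baseChange {L : Type*} [CommRing L] (ι : K →+* L)
    (φ : MvPolynomial σ K ≃ₐ[K] MvPolynomial σ K) :
    MvPolynomial σ L ≃ₐ[L] MvPolynomial σ L :=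
  AlgEquiv.ofAlgHom (aeval fun j => map ι (φ (X j))) (aeval fun j => map ι (φ.symm (X j)))
    (by
      apply MvPolynomial.algHom_ext
      intro i
      simp only [AlgHom.comp_apply, AlgHom.id_apply, aeval_X]
      have h2 := aeval_map_comm ι φ.toAlgHom (φ.symm (X i))
      simpa using h2)
    (by
      apply MvPolynomial.algHom_ext
      intro i
      simp only [AlgHom.comp_apply, AlgHom.id_apply, aeval_X]
      have h2 := aeval_map_comm ι φ.symm.toAlgHom (φ (X i))
      simpa using h2)

lemma baseChange_map {L : Type*} [CommRing L] (ι : K →+* L)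
    (φ : MvPolynomial σ K ≃ₐ[K] MvPolynomial σ K) (p : MvPolynomial σ K) :
    baseChange ι φ (map ι p) = map ι (φ p) :=
  aeval_map_comm ι φ.toAlgHom p

lemma baseChange_X {L : Type*} [CommRing L] (ι : K →+* L)
    (φ : MvPolynomial σ K ≃ₐ[K] MvPolynomial σ K) (i : σ) :
    baseChange ι φ (X i) = map ι (φ (X i)) := by
  show (aeval fun j => map ι (φ (X j))) (X i) = _
  rw [aeval_X]

lemma baseChange_symm_map {L : Type*} [CommRing L] (ι : K →+* L)
    (φ : MvPolynomial σ K ≃ₐ[K] MvPolynomial σ K) (p : MvPolynomial σ K) :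
    (baseChange ι φ).symm (map ι p) = map ι (φ.symm p) := by
  rw [show (baseChange ι φ).symm = baseChange ι φ.symm from ?_]
  · exact baseChange_map ι φ.symm p
  · apply AlgEquiv.ext
    intro p
    rw [baseChange, AlgEquiv.ofAlgHom_symm_apply]
    rfl

lemma aeval_eq_self_of [DecidableEq σ] (i0 : σ) (f : σ → MvPolynomial σ K)
    (hf : ∀ j, j ≠ i0 → f j = X j) (p : MvPolynomial σ K)
    (hp : ∀ m ∈ p.support, m i0 = 0) : aeval f p = p := by
  rw [p.as_sum, map_sum]
  refine Finset.sum_congr rfl fun m hm => ?_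
  rw [aeval_monomial]
  conv_rhs => rw [monomial_eq]
  rw [algebraMap_eq]
  congr 1
  refine Finset.prod_congr rfl fun j hj => ?_
  show f j ^ m j = (X j : MvPolynomial σ K) ^ m j
  rw [hf j ?_]
  intro hji
  subst hji
  exact (Finsupp.mem_support_iff.1 hj) (hp m hm)

noncomputable def elemAuto [DecidableEq σ] (i0 : σ) (h : MvPolynomial σ K)
    (hs : ∀ m ∈ h.support, m i0 = 0) : MvPolynomial σ K ≃ₐ[K] MvPolynomial σ K :=
  AlgEquiv.ofAlgHom (aeval fun j => if j = i0 then X i0 + h else X j)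
    (aeval fun j => if j = i0 then X i0 - h else X j)
    (by
      apply MvPolynomial.algHom_ext
      intro i
      simp only [AlgHom.comp_apply, AlgHom.id_apply, aeval_X]
      by_cases hi : i = i0
      · subst hi
        rw [if_pos rfl, map_sub, aeval_X, if_pos rfl,
          aeval_eq_self_of i _ (fun j hj => by rw [if_neg hj]) h hs]
        ring
      · rw [if_neg hi, aeval_X, if_neg hi])
    (by
      apply MvPolynomial.algHom_ext
      intro i
      simp only [AlgHom.comp_apply, AlgHom.id_apply, aeval_X]
      by_cases hi : i = i0
      · subst hi
        rw [if_pos rfl, map_add, aeval_X, if_pos rfl,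
          aeval_eq_self_of i _ (fun j hj => by rw [if_neg hj]) h hs]
        ring
      · rw [if_neg hi, aeval_X, if_neg hi])

lemma elemAuto_X [DecidableEq σ] (i0 : σ) (h : MvPolynomial σ K)
    (hs : ∀ m ∈ h.support, m i0 = 0) (i : σ) :
    elemAuto i0 h hs (X i) = if i = i0 then X i0 + h else X i := by
  show (aeval fun j => if j = i0 then X i0 + h else X j) (X i) = _
  rw [aeval_X]

end Aux

/-- Theorem 2.1(b) (family form). -/
theorem exists_family_of_conjugates
    (K : Type*) [Field K] [IsAlgClosed K] (n : ℕ)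
    (φ : MvPolynomial (Fin (n + 2)) K ≃ₐ[K] MvPolynomial (Fin (n + 2)) K)
    (d : ℕ) (hd2 : 2 ≤ d)
    (hdeg : d = Finset.univ.sup fun i => (φ (X i)).totalDegree)
    (haff : ∀ i, φ (X i) - X i ∈
      (Ideal.span (Set.range (X : Fin (n + 2) → MvPolynomial (Fin (n + 2)) K))) ^ 2)
    (hne : φ (X 0) ≠ X 0)
    (g0 : MvPolynomial (Fin (n + 2)) K)
    (hg0 : g0 = aeval (fun i : Fin (n + 2) => if i = 0 then 0 else X i) (φ (X 0)))
    (w : ℕ) (hw2 : 2 ≤ w)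
    (hw : g0 ∈ (Ideal.span ((X : Fin (n + 2) → MvPolynomial (Fin (n + 2)) K) ''
          {i : Fin (n + 2) | i ≠ 0})) ^ w ∧
        g0 ∉ (Ideal.span ((X : Fin (n + 2) → MvPolynomial (Fin (n + 2)) K) ''
          {i : Fin (n + 2) | i ≠ 0})) ^ (w + 1))
    (h : MvPolynomial (Fin (n + 2)) K) (hh : h = homogeneousComponent w g0) :
    ∃ Φ : MvPolynomial (Fin (n + 2)) (Polynomial K) ≃ₐ[Polynomial K]
        MvPolynomial (Fin (n + 2)) (Polynomial K),
      (∀ i : Fin (n + 2),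
        C ((RatFunc.X : RatFunc K) ^ if i = 0 then w else 1) *
            MvPolynomial.map (algebraMap (Polynomial K) (RatFunc K)) (Φ (X i))
          = eval₂Hom ((C : RatFunc K →+* MvPolynomial (Fin (n + 2)) (RatFunc K)).comp
              (algebraMap K (RatFunc K)))
              (fun j : Fin (n + 2) => C ((RatFunc.X : RatFunc K) ^ if j = 0 then w else 1) * X j)
              (φ (X i))) ∧
      (∀ t0 : K, t0 ≠ 0 →
        ∃ α : MvPolynomial (Fin (n + 2)) K ≃ₐ[K] MvPolynomial (Fin (n + 2)) K,
          (∀ i : Fin (n + 2), α (X i) = C (t0 ^ if i = 0 then w else 1) * X i) ∧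
          (∀ i : Fin (n + 2), MvPolynomial.map (Polynomial.evalRingHom t0) (Φ (X i))
            = α (φ (α.symm (X i)))) ∧
          (∀ i : Fin (n + 2),
            (MvPolynomial.map (Polynomial.evalRingHom t0) (Φ (X i))).totalDegree ≤ d)) ∧
      (∀ i : Fin (n + 2), MvPolynomial.map (Polynomial.evalRingHom (0 : K)) (Φ (X i))
        = if i = 0 then X 0 + h else X i) ∧
      (∀ i : Fin (n + 2),
        (MvPolynomial.map (Polynomial.evalRingHom (0 : K)) (Φ (X i))).totalDegree ≤ d) := by
  classical
  set wt : Fin (n + 2) → ℕ := fun j => if j = 0 then w else 1 with hwtdef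
  set Wd : (Fin (n + 2) →₀ ℕ) → ℕ := Aux.wdeg wt with hWdef
  have hwpos : 0 < w := by omega
  have hwt1 : ∀ j, 1 ≤ wt j := by
    intro j
    by_cases hj : j = 0 <;> simp [hwtdef, hj] <;> omega
  have hsplit : ∀ (c : ℕ) (m : Fin (n + 2) →₀ ℕ),
      (m.sum fun j k => (if j = 0 then c else 1) * k)
        = c * m 0 + (m.sum fun j k => if j = 0 then 0 else k) := by
    intro c m
    rw [Finsupp.sum, Finsupp.sum,
      Finset.sum_congr rfl (fun j _ => show (if j = 0 then c else 1) * m j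
        = (if j = 0 then c * m j else 0) + (if j = 0 then 0 else m j) by split <;> simp),
      Finset.sum_add_distrib]
    congr 1
    rw [Finset.sum_ite_eq' m.support (0 : Fin (n + 2)) (fun j => c * m j)]
    by_cases h0 : (0 : Fin (n + 2)) ∈ m.support
    · rw [if_pos h0]
    · rw [if_neg h0, Finsupp.notMem_support_iff.1 h0, mul_zero]
  have hWsplit : ∀ m : Fin (n + 2) →₀ ℕ,
      Wd m = w * m 0 + (m.sum fun j k => if j = 0 then 0 else k) := by
    intro m
    have : Wd m = m.sum fun j k => (if j = 0 then w else 1) * k := rfl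
    rw [this, hsplit w m]
  have hdegsplit : ∀ m : Fin (n + 2) →₀ ℕ,
      m.degree = m 0 + (m.sum fun j k => if j = 0 then 0 else k) := by
    intro m
    have h1 := hsplit 1 m
    rw [one_mul] at h1
    have h2 : m.degree = m.sum fun j k => 1 * k := by
      rw [Aux.degree_eq_wdeg]; rfl
    have h3 : (m.sum fun j k => 1 * k) = m.sum fun j k => (if j = 0 then 1 else 1) * k :=
      Finset.sum_congr rfl fun j _ => by simp
    rw [h2, h3, h1]
  have hdegW : ∀ m, m.degree ≤ Wd m := by
    intro m
    rw [Aux.degree_eq_wdeg]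
    exact Aux.wdeg_mono hwt1 m
  have hdeg0 : ∀ m : Fin (n + 2) →₀ ℕ, m 0 = 0 → Wd m = m.degree := by
    intro m h0
    rw [hWsplit, hdegsplit, h0]
    simp
  have hWeq1 : ∀ m : Fin (n + 2) →₀ ℕ, m 0 ≠ 0 → Wd m = w → m = Finsupp.single 0 1 := by
    intro m h0 hW
    rw [hWsplit m] at hW
    have h1 : 1 ≤ m 0 := Nat.one_le_iff_ne_zero.2 h0
    have hle : w ≤ w * m 0 := Nat.le_mul_of_pos_right w h1
    have hD : (m.sum fun j k => if j = 0 then 0 else k) = 0 := by omega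
    have hm0 : m 0 = 1 := by
      have hmul : w * m 0 = w * 1 := by omega
      exact Nat.eq_of_mul_eq_mul_left hwpos hmul
    have hz : ∀ j, j ≠ 0 → m j = 0 := by
      intro j hj
      by_contra hc
      have hmem : j ∈ m.support := Finsupp.mem_support_iff.2 hc
      have hpos : 0 < (if j = 0 then 0 else m j) := by
        rw [if_neg hj]; omega
      have hle2 : (if j = 0 then 0 else m j) ≤ m.sum fun j k => if j = 0 then 0 else k := by
        rw [Finsupp.sum]
        exact Finset.single_le_sum (f := fun j => if j = 0 then 0 else m j)
          (fun _ _ => Nat.zero_le _) hmem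
      omega
    ext j
    by_cases hj : j = 0
    · subst hj; simp [hm0]
    · rw [hz j hj, Finsupp.single_apply, if_neg (fun hh => hj hh.symm)]
  have haffc : ∀ i m, m.degree ≤ 1 → coeff m (φ (X i)) = coeff m (X i) := by
    intro i m hm
    have h2 := Aux.wdeg_ge_of_mem_span_pow (K := K) (Set.univ : Set (Fin (n + 2)))
      (fun _ => 1) (fun _ _ => le_refl 1) 2 _ (by rw [Set.image_univ]; exact haff i)
    have hz : coeff m (φ (X i) - X i) = 0 := by
      by_contra hc
      have h3 := h2 m (mem_support_iff.2 hc)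
      rw [← Aux.degree_eq_wdeg] at h3
      omega
    rw [coeff_sub, sub_eq_zero] at hz
    exact hz

  have hg0c : ∀ m, coeff m g0 = if m 0 = 0 then coeff m (φ (X 0)) else 0 := by
    intro m
    rw [hg0]
    conv_lhs => rw [(φ (X 0)).as_sum, map_sum]
    have hterm : ∀ (m' : Fin (n + 2) →₀ ℕ) (c : K),
        (aeval fun i : Fin (n + 2) => if i = 0 then (0 : MvPolynomial (Fin (n + 2)) K) else X i)
          (monomial m' c) = if m' 0 = 0 then monomial m' c else 0 := by
      intro m' c
      rw [aeval_monomial]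
      by_cases h0 : m' 0 = 0
      · rw [if_pos h0]
        conv_rhs => rw [monomial_eq]
        rw [algebraMap_eq]
        congr 1
        refine Finset.prod_congr rfl fun j hj => ?_
        show (if j = 0 then (0 : MvPolynomial (Fin (n + 2)) K) else X j) ^ m' j
          = (X j : MvPolynomial (Fin (n + 2)) K) ^ m' j
        rw [if_neg]
        intro hj0
        subst hj0
        exact (Finsupp.mem_support_iff.1 hj) h0
      · rw [if_neg h0, Finsupp.prod, Finset.prod_eq_zero (Finsupp.mem_support_iff.2 h0), mul_zero]
        show (if (0 : Fin (n + 2)) = 0 then (0 : MvPolynomial (Fin (n + 2)) K) else X 0) ^ m' 0 = 0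
        rw [if_pos rfl, zero_pow h0]
    rw [Finset.sum_congr rfl fun m' _ => hterm m' _, Finset.sum_ite, Finset.sum_const_zero,
      add_zero, Aux.coeff_sum_monomial']
    by_cases h0 : m 0 = 0
    · rw [if_pos h0]
      by_cases hms : m ∈ (φ (X 0)).support
      · rw [if_pos (Finset.mem_filter.2 ⟨hms, h0⟩)]
      · have hnm : m ∉ Finset.filter (fun x => x 0 = 0) (φ (X 0)).support :=
          fun hmem => hms (Finset.mem_filter.1 hmem).1
        rw [if_neg hnm, notMem_support_iff.1 hms]
    · have hnm : m ∉ Finset.filter (fun x => x 0 = 0) (φ (X 0)).support :=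
        fun hmem => h0 (Finset.mem_filter.1 hmem).2
      rw [if_neg h0, if_neg hnm]

  have hval : ∀ i, ∀ m ∈ (φ (X i)).support, wt i ≤ Wd m := by
    intro i m hm
    by_cases hi : i = 0
    · subst hi
      have hwi : wt 0 = w := by simp [hwtdef]
      rw [hwi]
      by_cases h0 : m 0 = 0
      · have hgm : m ∈ g0.support := by
          rw [mem_support_iff, hg0c m, if_pos h0]
          exact mem_support_iff.1 hm
        have h2 := Aux.wdeg_ge_of_mem_span_pow (K := K) {i : Fin (n + 2) | i ≠ 0}
          (fun j => if j = 0 then 0 else 1)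
          (fun j hj => by simp only [Set.mem_setOf_eq] at hj; show (1:ℕ) ≤ if j = 0 then 0 else 1; rw [if_neg hj]) w g0 hw.1 m hgm
        refine le_trans h2 (le_trans (le_of_eq ?_) (le_refl _))
        show Aux.wdeg (fun j => if j = 0 then 0 else 1) m = Wd m
        rw [hdeg0 m h0, Aux.degree_eq_wdeg]
        unfold Aux.wdeg
        rw [Finsupp.sum, Finsupp.sum]
        refine Finset.sum_congr rfl fun j hj => ?_
        show (if j = 0 then 0 else 1) * m j = 1 * m j
        rw [if_neg]
        intro hj0
        subst hj0
        exact (Finsupp.mem_support_iff.1 hj) h0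
      · have h1 : w * m 0 ≤ Wd m := by
          rw [hWsplit m]
          exact Nat.le_add_right _ _
        have h2 : w ≤ w * m 0 := Nat.le_mul_of_pos_right w (Nat.one_le_iff_ne_zero.2 h0)
        omega
    · have hwi : wt i = 1 := by simp [hwtdef, hi]
      rw [hwi]
      by_contra hc
      have hW0 : Wd m = 0 := by omega
      have hdm : m.degree = 0 := by
        have := hdegW m
        omega
      have hm0 : m = 0 := (Finsupp.degree_eq_zero_iff m).1 hdm
      have : coeff m (φ (X i)) = coeff m (X i) := haffc i m (by omega)
      rw [hm0] at this
      rw [mem_support_iff, hm0] at hm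
      rw [coeff_zero_X] at this
      exact hm this
  have hhc : ∀ m, coeff m h = if m.degree = w ∧ m 0 = 0 then coeff m (φ (X 0)) else 0 := by
    intro m
    rw [hh, coeff_homogeneousComponent]
    by_cases hd : m.degree = w
    · rw [if_pos hd, hg0c m]
      by_cases h0 : m 0 = 0 <;> simp [h0, hd]
    · rw [if_neg hd, if_neg (by tauto)]
  have hhsupp : ∀ m ∈ h.support, m 0 = 0 := by
    intro m hm
    by_contra h0
    exact (mem_support_iff.1 hm) (by rw [hhc m, if_neg (by tauto)])
  have htd : ∀ i, (φ (X i)).totalDegree ≤ d := by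
    intro i
    rw [hdeg]
    exact Finset.le_sup (f := fun i => (φ (X i)).totalDegree) (Finset.mem_univ i)
  -- the family
  set F : Fin (n + 2) → MvPolynomial (Fin (n + 2)) (Polynomial K) :=
    fun i => Aux.twist (φ (X i)) (fun m => Wd m - wt i) with hFdef
  have hFsupp : ∀ i, (F i).support ⊆ (φ (X i)).support := by
    intro i m hm
    rw [mem_support_iff, Aux.coeff_twist] at hm
    rw [mem_support_iff]
    intro hc
    exact hm (by rw [hc]; simp)
  have hFtd : ∀ i (τ : Polynomial K →+* K), (MvPolynomial.map τ (F i)).totalDegree ≤ d := by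
    intro i τ
    refine le_trans (totalDegree_le_of_support_subset ?_) (htd i)
    exact subset_trans (support_map_subset τ (F i)) (hFsupp i)
  -- F-level objects
  have hιK : ∀ c : K, algebraMap K (RatFunc K) c
      = algebraMap (Polynomial K) (RatFunc K) (Polynomial.C c) := by
    intro c
    rw [IsScalarTower.algebraMap_eq K (Polynomial K) (RatFunc K)]
    rfl
  have htne : (RatFunc.X : RatFunc K) ≠ 0 := RatFunc.X_ne_zero
  have hsne : ∀ j, (RatFunc.X : RatFunc K) ^ wt j ≠ 0 := fun j => pow_ne_zero _ htne
  set scl := Aux.scaleEquiv (RatFunc K) (fun j => (RatFunc.X : RatFunc K) ^ wt j) hsne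
    with hscldef
  set φF := Aux.baseChange (algebraMap K (RatFunc K)) φ with hφFdef
  set Ξ := (scl.symm.trans φF).trans scl with hΞdef
  have hΞapp : ∀ p, Ξ p = scl (φF (scl.symm p)) := fun p => rfl
  have hφFC : ∀ a : RatFunc K, φF (C a) = C a := by
    intro a
    rw [show (C a : MvPolynomial (Fin (n + 2)) (RatFunc K)) = algebraMap (RatFunc K) _ a from rfl]
    exact φF.commutes a
  have hsclC : ∀ a : RatFunc K, scl (C a) = C a := by
    intro a
    rw [show (C a : MvPolynomial (Fin (n + 2)) (RatFunc K)) = algebraMap (RatFunc K) _ a from rfl]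
    exact scl.commutes a
  have hsclmono : ∀ (m : Fin (n + 2) →₀ ℕ) (c : RatFunc K),
      scl (monomial m c) = monomial m (c * RatFunc.X ^ Wd m) := by
    intro m c
    rw [hscldef]
    show (aeval fun j => C ((RatFunc.X : RatFunc K) ^ wt j) * X j) (monomial m c) = _
    rw [Aux.aeval_scale_monomial, Aux.prod_pow_wdeg]
  have hsclmap : ∀ p : MvPolynomial (Fin (n + 2)) K,
      scl (MvPolynomial.map (algebraMap K (RatFunc K)) p)
        = ∑ m ∈ p.support,
            monomial m (algebraMap K (RatFunc K) (coeff m p) * RatFunc.X ^ Wd m) := by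
    intro p
    rw [show MvPolynomial.map (algebraMap K (RatFunc K)) p
        = ∑ m ∈ p.support, monomial m (algebraMap K (RatFunc K) (coeff m p)) from by
      conv_lhs => rw [p.as_sum]
      rw [map_sum]
      exact Finset.sum_congr rfl fun m _ => map_monomial _ _ _]
    rw [map_sum scl]
    exact Finset.sum_congr rfl fun m _ => hsclmono m _
  have hmapF : ∀ i, MvPolynomial.map (algebraMap (Polynomial K) (RatFunc K)) (F i)
      = ∑ m ∈ (φ (X i)).support,
          monomial m (algebraMap K (RatFunc K) (coeff m (φ (X i)))
            * RatFunc.X ^ (Wd m - wt i)) := by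
    intro i
    rw [show F i = Aux.twist (φ (X i)) (fun m => Wd m - wt i) from rfl, Aux.map_twist]
    exact Finset.sum_congr rfl fun m _ => by rw [← hιK, RatFunc.algebraMap_X]
  have hXiF : ∀ i, Ξ (X i)
      = MvPolynomial.map (algebraMap (Polynomial K) (RatFunc K)) (F i) := by
    intro i
    rw [hΞapp, hscldef, Aux.scaleEquiv_symm_apply, aeval_X, ← hscldef, map_mul, hφFC,
      Aux.baseChange_X, map_mul, hsclC, hsclmap, hmapF, Finset.mul_sum]
    refine Finset.sum_congr rfl fun m hm => ?_
    rw [C_mul_monomial]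
    congr 1
    have hv := hval i m hm
    have hx : (RatFunc.X : RatFunc K) ^ (Wd m - wt i) * RatFunc.X ^ wt i
        = RatFunc.X ^ Wd m := by
      rw [← pow_add]
      congr 1
      omega
    rw [inv_mul_eq_iff_eq_mul₀ (hsne i), ← hx]
    ring
  have hmapFΞ : ∀ p : MvPolynomial (Fin (n + 2)) (Polynomial K),
      MvPolynomial.map (algebraMap (Polynomial K) (RatFunc K)) (aeval F p)
        = Ξ (MvPolynomial.map (algebraMap (Polynomial K) (RatFunc K)) p) := by
    intro p
    rw [Aux.map_aeval_comm]
    have hA : (aeval fun j => MvPolynomial.map (algebraMap (Polynomial K) (RatFunc K)) (F j))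
        = (Ξ : MvPolynomial (Fin (n + 2)) (RatFunc K) →ₐ[RatFunc K]
            MvPolynomial (Fin (n + 2)) (RatFunc K)) := by
      apply MvPolynomial.algHom_ext
      intro i
      rw [aeval_X]
      exact (hXiF i).symm
    rw [hA]
    rfl
  have hinjmap : Function.Injective
      (MvPolynomial.map (algebraMap (Polynomial K) (RatFunc K)) :
        MvPolynomial (Fin (n + 2)) (Polynomial K) → MvPolynomial (Fin (n + 2)) (RatFunc K)) :=
    MvPolynomial.map_injective _ (RatFunc.algebraMap_injective K)
  have hinj : Function.Injective (aeval F :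
      MvPolynomial (Fin (n + 2)) (Polynomial K) →ₐ[Polynomial K]
        MvPolynomial (Fin (n + 2)) (Polynomial K)) := by
    intro p q hpq
    apply hinjmap
    have h2 := congrArg (MvPolynomial.map (algebraMap (Polynomial K) (RatFunc K))) hpq
    rw [hmapFΞ, hmapFΞ] at h2
    exact Ξ.injective h2
  -- specialization at 0, coefficientwise
  have hev0 : ∀ i m, coeff m (MvPolynomial.map (Polynomial.evalRingHom (0 : K)) (F i))
      = if Wd m = wt i then coeff m (φ (X i)) else 0 := by
    intro i m
    rw [coeff_map]
    rw [show coeff m (F i) = Polynomial.C (coeff m (φ (X i))) * Polynomial.X ^ (Wd m - wt i)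
      from Aux.coeff_twist _ _ _]
    rw [map_mul, map_pow]
    have e1 : Polynomial.evalRingHom (0 : K) (Polynomial.C (coeff m (φ (X i))))
        = coeff m (φ (X i)) := Polynomial.eval_C
    have e2 : Polynomial.evalRingHom (0 : K) Polynomial.X = 0 := Polynomial.eval_X
    rw [e1, e2]
    by_cases hc : coeff m (φ (X i)) = 0
    · rw [hc]
      simp
    · have hv := hval i m (mem_support_iff.2 hc)
      by_cases hWc : Wd m = wt i
      · rw [if_pos hWc, hWc, Nat.sub_self, pow_zero, mul_one]
      · rw [if_neg hWc, zero_pow (by omega : Wd m - wt i ≠ 0), mul_zero]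
  have hE0 : ∀ i, MvPolynomial.map (Polynomial.evalRingHom (0 : K)) (F i)
      = if i = 0 then X 0 + h else X i := by
    intro i
    by_cases hi : i = 0
    · subst hi
      rw [if_pos rfl]
      apply MvPolynomial.ext
      intro m
      rw [hev0, coeff_add, hhc]
      have hwt0 : wt 0 = w := by simp [hwtdef]
      rw [hwt0]
      by_cases h0 : m 0 = 0
      · have hX0 : coeff m (X 0 : MvPolynomial (Fin (n + 2)) K) = 0 := by
          rw [coeff_X', if_neg]
          intro heq
          have hm01 : m 0 = 1 := by
            rw [← heq]
            simp
          omega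
        rw [hX0, zero_add, ← hdeg0 m h0]
        by_cases hWc : Wd m = w <;> simp [hWc, h0]
      · have hh0 : (if m.degree = w ∧ m 0 = 0 then coeff m (φ (X 0)) else 0) = 0 :=
          if_neg (by tauto)
        rw [hh0, add_zero, coeff_X']
        by_cases hm1 : (Finsupp.single 0 1 : Fin (n + 2) →₀ ℕ) = m
        · rw [if_pos hm1]
          have hWm : Wd m = w := by
            rw [← hm1, show Wd (Finsupp.single 0 1) = wt 0 from Aux.wdeg_single wt 0, hwt0]
          rw [if_pos hWm]
          have hdm : m.degree ≤ 1 := by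
            rw [← hm1, Aux.degree_eq_wdeg, Aux.wdeg_single]
          rw [haffc 0 m hdm, coeff_X', if_pos hm1]
        · rw [if_neg hm1, if_neg]
          intro hWm
          exact hm1 (hWeq1 m h0 hWm).symm
    · rw [if_neg hi]
      apply MvPolynomial.ext
      intro m
      rw [hev0]
      have hwti : wt i = 1 := by simp [hwtdef, hi]
      rw [hwti]
      by_cases hWc : Wd m = 1
      · rw [if_pos hWc]
        exact haffc i m (le_trans (hdegW m) (le_of_eq hWc))
      · rw [if_neg hWc, coeff_X', if_neg]
        intro hm1
        apply hWc
        rw [← hm1, show Wd (Finsupp.single i 1) = wt i from Aux.wdeg_single wt i, hwti]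
  -- commuting with specialization at 0
  have hΘ : ∀ p : MvPolynomial (Fin (n + 2)) (Polynomial K),
      MvPolynomial.map (Polynomial.evalRingHom (0 : K)) (aeval F p)
        = Aux.elemAuto 0 h hhsupp (MvPolynomial.map (Polynomial.evalRingHom (0 : K)) p) := by
    intro p
    rw [Aux.map_aeval_comm]
    have hA : (aeval fun j => MvPolynomial.map (Polynomial.evalRingHom (0 : K)) (F j))
        = (Aux.elemAuto 0 h hhsupp : MvPolynomial (Fin (n + 2)) K →ₐ[K]
            MvPolynomial (Fin (n + 2)) K) := by
      apply MvPolynomial.algHom_ext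
      intro i
      rw [aeval_X, hE0 i]
      exact (Aux.elemAuto_X 0 h hhsupp i).symm
    rw [hA]
    rfl
  -- descent for surjectivity
  have hdesc : ∀ (k : ℕ) (i : Fin (n + 2)) (P : MvPolynomial (Fin (n + 2)) (Polynomial K)),
      MvPolynomial.map (algebraMap (Polynomial K) (RatFunc K)) (aeval F P)
        = C ((RatFunc.X : RatFunc K) ^ k) * X i →
      X i ∈ (aeval F : MvPolynomial (Fin (n + 2)) (Polynomial K) →ₐ[Polynomial K]
        MvPolynomial (Fin (n + 2)) (Polynomial K)).range := by
    intro k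
    induction k with
    | zero =>
      intro i P hP
      refine ⟨P, ?_⟩
      show (aeval F) P = X i
      apply hinjmap
      rw [hP, pow_zero, map_one, one_mul, map_X]
    | succ k ih =>
      intro i P hP
      have hQ : aeval F P = C (Polynomial.X ^ (k + 1)) * X i := by
        apply hinjmap
        rw [hP, map_mul, map_X, map_C]
        congr 2
        rw [map_pow, RatFunc.algebraMap_X]
      have hz : MvPolynomial.map (Polynomial.evalRingHom (0 : K)) (aeval F P) = 0 := by
        rw [hQ, map_mul, map_C, map_X]
        have e3 : Polynomial.evalRingHom (0 : K) (Polynomial.X ^ (k + 1)) = 0 := by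
          rw [map_pow]
          have e2 : Polynomial.evalRingHom (0 : K) Polynomial.X = 0 := Polynomial.eval_X
          rw [e2, zero_pow (Nat.succ_ne_zero k)]
        rw [e3, map_zero, zero_mul]
      rw [hΘ] at hz
      have hP0 : MvPolynomial.map (Polynomial.evalRingHom (0 : K)) P = 0 := by
        apply (Aux.elemAuto 0 h hhsupp).injective
        rw [hz, map_zero]
      obtain ⟨P', hP'⟩ : ∃ P', P = C Polynomial.X * P' := by
        refine ⟨∑ m ∈ P.support, monomial m ((coeff m P).divX), ?_⟩
        rw [Finset.mul_sum]
        conv_lhs => rw [P.as_sum]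
        refine Finset.sum_congr rfl fun m hm => ?_
        rw [C_mul_monomial]
        congr 1
        have hc0 : (coeff m P).coeff 0 = 0 := by
          have h4 := congrArg (coeff m) hP0
          rw [coeff_map, coeff_zero] at h4
          rw [Polynomial.coeff_zero_eq_eval_zero]
          exact h4
        conv_lhs => rw [← Polynomial.X_mul_divX_add (coeff m P)]
        rw [hc0, map_zero, add_zero]
      refine ih i P' ?_
      have hCX : (C (RatFunc.X : RatFunc K) : MvPolynomial (Fin (n + 2)) (RatFunc K)) ≠ 0 := by
        rw [Ne, C_eq_zero]
        exact htne
      apply mul_left_cancel₀ hCX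
      have h5 : MvPolynomial.map (algebraMap (Polynomial K) (RatFunc K)) (aeval F P)
          = C (RatFunc.X : RatFunc K)
            * MvPolynomial.map (algebraMap (Polynomial K) (RatFunc K)) (aeval F P') := by
        rw [hP', map_mul, map_mul]
        congr 1
        rw [show aeval F (C Polynomial.X) = C Polynomial.X from aeval_C F Polynomial.X,
          map_C, RatFunc.algebraMap_X]
      rw [← h5, hP, pow_succ, C_mul]
      ring
  -- surjectivity
  have hsurj : Function.Surjective (aeval F :
      MvPolynomial (Fin (n + 2)) (Polynomial K) →ₐ[Polynomial K]
        MvPolynomial (Fin (n + 2)) (Polynomial K)) := by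
    have hrange : ∀ i, X i ∈ (aeval F : MvPolynomial (Fin (n + 2)) (Polynomial K) →ₐ[Polynomial K]
        MvPolynomial (Fin (n + 2)) (Polynomial K)).range := by
      intro i
      refine hdesc (wt i) i (Aux.twist (φ.symm (X i)) Wd) ?_
      rw [hmapFΞ]
      have h1 : MvPolynomial.map (algebraMap (Polynomial K) (RatFunc K))
            (Aux.twist (φ.symm (X i)) Wd)
          = scl (MvPolynomial.map (algebraMap K (RatFunc K)) (φ.symm (X i))) := by
        rw [hsclmap, Aux.map_twist]
        exact Finset.sum_congr rfl fun m _ => by rw [← hιK, RatFunc.algebraMap_X]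
      rw [h1, hΞapp, AlgEquiv.symm_apply_apply, Aux.baseChange_map, AlgEquiv.apply_symm_apply,
        map_X, hscldef, Aux.scaleEquiv_X]
    intro p
    have hp : p ∈ (aeval F : MvPolynomial (Fin (n + 2)) (Polynomial K) →ₐ[Polynomial K]
        MvPolynomial (Fin (n + 2)) (Polynomial K)).range := by
      have htop : (aeval F : MvPolynomial (Fin (n + 2)) (Polynomial K) →ₐ[Polynomial K]
          MvPolynomial (Fin (n + 2)) (Polynomial K)).range = ⊤ := by
        rw [eq_top_iff, ← MvPolynomial.adjoin_range_X]
        refine Algebra.adjoin_le ?_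
        rintro x ⟨i, rfl⟩
        exact hrange i
      rw [htop]
      trivial
    obtain ⟨q, hq⟩ := hp
    exact ⟨q, hq⟩
  have hOB : ∀ i, (AlgEquiv.ofBijective (aeval F) ⟨hinj, hsurj⟩) (X i) = F i :=
    fun i => aeval_X F i
  refine ⟨AlgEquiv.ofBijective (aeval F) ⟨hinj, hsurj⟩, ?_, ?_, ?_, ?_⟩
  · -- defining equations
    intro i
    rw [hOB i, hmapF i]
    have hER : (eval₂Hom ((C : RatFunc K →+* MvPolynomial (Fin (n + 2)) (RatFunc K)).comp
          (algebraMap K (RatFunc K)))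
          (fun j : Fin (n + 2) => C ((RatFunc.X : RatFunc K) ^ if j = 0 then w else 1) * X j))
          (φ (X i))
        = ∑ m ∈ (φ (X i)).support,
            monomial m (algebraMap K (RatFunc K) (coeff m (φ (X i))) * RatFunc.X ^ Wd m) := by
      conv_lhs => rw [(φ (X i)).as_sum, map_sum]
      refine Finset.sum_congr rfl fun m _ => ?_
      refine ((Aux.eval₂_scale_monomial (algebraMap K (RatFunc K))
        (fun j => (RatFunc.X : RatFunc K) ^ if j = 0 then w else 1) m
        (coeff m (φ (X i)))).trans ?_)
      congr 1
      rw [show (m.prod fun j k => ((RatFunc.X : RatFunc K) ^ if j = 0 then w else 1) ^ k)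
          = RatFunc.X ^ Aux.wdeg (fun j : Fin (n + 2) => if j = 0 then w else 1) m from
        Aux.prod_pow_wdeg _ _ m]
    rw [hER, Finset.mul_sum]
    refine Finset.sum_congr rfl fun m hm => ?_
    rw [C_mul_monomial]
    congr 1
    have hv := hval i m hm
    have hx : (RatFunc.X : RatFunc K) ^ (Wd m - wt i) * RatFunc.X ^ wt i
        = RatFunc.X ^ Wd m := by
      rw [← pow_add]
      congr 1
      omega
    show (RatFunc.X : RatFunc K) ^ wt i
        * (algebraMap K (RatFunc K) (coeff m (φ (X i))) * RatFunc.X ^ (Wd m - wt i))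
      = algebraMap K (RatFunc K) (coeff m (φ (X i))) * RatFunc.X ^ Wd m
    rw [← hx]
    ring
  · -- specialization at t0 ≠ 0
    intro t0 ht0
    have hte : ∀ j, t0 ^ wt j ≠ 0 := fun j => pow_ne_zero _ ht0
    refine ⟨Aux.scaleEquiv K (fun j => t0 ^ wt j) hte, fun i => by rw [Aux.scaleEquiv_X],
      ?_, fun i => by rw [hOB i]; exact hFtd i _⟩
    intro i
    rw [hOB i]
    have hLHS : MvPolynomial.map (Polynomial.evalRingHom t0) (F i)
        = ∑ m ∈ (φ (X i)).support,
            monomial m (coeff m (φ (X i)) * t0 ^ (Wd m - wt i)) := by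
      rw [show F i = Aux.twist (φ (X i)) (fun m => Wd m - wt i) from rfl, Aux.map_twist]
      refine Finset.sum_congr rfl fun m _ => ?_
      congr 1
      rw [show Polynomial.evalRingHom t0 (Polynomial.C (coeff m (φ (X i))))
          = coeff m (φ (X i)) from Polynomial.eval_C,
        show Polynomial.evalRingHom t0 Polynomial.X = t0 from Polynomial.eval_X]
    rw [hLHS, Aux.scaleEquiv_symm_apply, aeval_X]
    have hφC : ∀ a : K, φ (C a) = C a := fun a => by
      rw [show (C a : MvPolynomial (Fin (n + 2)) K) = algebraMap K _ a from rfl]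
      exact φ.commutes a
    have hαC : ∀ a : K, Aux.scaleEquiv K (fun j => t0 ^ wt j) hte (C a) = C a := fun a => by
      rw [show (C a : MvPolynomial (Fin (n + 2)) K) = algebraMap K _ a from rfl]
      exact (Aux.scaleEquiv K _ hte).commutes a
    rw [map_mul, hφC, map_mul, hαC]
    have hα : Aux.scaleEquiv K (fun j => t0 ^ wt j) hte (φ (X i))
        = ∑ m ∈ (φ (X i)).support, monomial m (coeff m (φ (X i)) * t0 ^ Wd m) := by
      show (aeval fun j => C (t0 ^ wt j) * X j) (φ (X i)) = _
      conv_lhs => rw [(φ (X i)).as_sum, map_sum]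
      refine Finset.sum_congr rfl fun m _ => ?_
      rw [Aux.aeval_scale_monomial]
      congr 1
      rw [show (m.prod fun j k => (t0 ^ wt j) ^ k) = t0 ^ Aux.wdeg wt m from
        Aux.prod_pow_wdeg t0 wt m]
    rw [hα, Finset.mul_sum]
    refine Finset.sum_congr rfl fun m hm => ?_
    rw [C_mul_monomial]
    congr 1
    have hv := hval i m hm
    have hx : t0 ^ (Wd m - wt i) * t0 ^ wt i = t0 ^ Wd m := by
      rw [← pow_add]
      congr 1
      omega
    rw [eq_inv_mul_iff_mul_eq₀ (hte i), ← hx]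
    ring
  · -- specialization at 0
    intro i
    rw [hOB i]
    exact hE0 i
  · -- degrees at 0
    intro i
    rw [hOB i]
    exact hFtd i _
end
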